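/- Assume that for every s ∈ S, d(inl s, inr φ(s)) ≤ γ · W_d(κ(inl s), κ(inr φ(s))), and that singletons of S are measurable. If s₁, s₂ ∈ S satisfy φ(s₁) = φ(s₂), ξ({s₁}) > 0 and ξ({s₂}) > 0, then d(inl s₁, inl s₂) ≤ (γ L_P/(1−γ)) · (ξ({s₁})⁻¹ + ξ({s₂})⁻¹). -/

import Mathlib

open MeasureTheory ProbabilityTheory

noncomputable def tvDist {X : Type*} [MeasurableSpace X] (μ ν : Measure X) : ℝ :=
  ⨆ A : {A : Set X // MeasurableSet A}, |(μ A.1).toReal - (ν A.1).toReal|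

noncomputable def wassDual {X : Type*} [MeasurableSpace X] (d : X → X → ℝ)
    (μ ν : Measure X) : ℝ :=
  ⨆ f : {f : X → ℝ // Measurable f ∧ (∃ C, ∀ x, |f x| ≤ C) ∧ ∀ x y, |f x - f y| ≤ d x y},
    |(∫ x, f.1 x ∂μ) - ∫ x, f.1 x ∂ν|

/-!
Write `g s = d (inl s) (inr (φ s))` for the distance of a state to its abstraction. Comparing
a `d`-Lipschitz test function along the coupling `s ↦ (inl s, inr (φ s))`, and then on the
abstract side through total variation, turns the fixed-point hypothesis into
`g s ≤ γ (∫ g d(P s) + T s)` with `T s` the local total-variation error. Integrating against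
the invariant measure `ξ` gives `∫ g dξ ≤ γ (∫ g dξ + L_P)`, i.e. `∫ g dξ ≤ γ L_P / (1 - γ)`.
Markov's inequality at an atom gives `g s ≤ (∫ g dξ) / ξ {s}`, and the triangle inequality
through the common abstract state `inr (φ s₁) = inr (φ s₂)` concludes.
-/

section TotalVariation

variable {X : Type*} [MeasurableSpace X] {μ ν : Measure X}

lemma tvDist_comm : tvDist μ ν = tvDist ν μ := by
  simp only [tvDist, abs_sub_comm]

lemma abs_measureReal_sub_le_tvDist [IsProbabilityMeasure μ] [IsProbabilityMeasure ν]
    {A : Set X} (hA : MeasurableSet A) : |μ.real A - ν.real A| ≤ tvDist μ ν := by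
  refine le_ciSup (f := fun B : {B : Set X // MeasurableSet B} => |μ.real B - ν.real B|)
    ⟨1, ?_⟩ ⟨A, hA⟩
  rintro _ ⟨B, rfl⟩
  exact abs_sub_le_of_nonneg_of_le measureReal_nonneg measureReal_le_one
    measureReal_nonneg measureReal_le_one

lemma tvDist_nonneg [IsProbabilityMeasure μ] [IsProbabilityMeasure ν] : 0 ≤ tvDist μ ν :=
  (abs_nonneg _).trans (abs_measureReal_sub_le_tvDist MeasurableSet.empty)

lemma tvDist_le_one [IsProbabilityMeasure μ] [IsProbabilityMeasure ν] : tvDist μ ν ≤ 1 :=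
  ciSup_le fun _ => abs_sub_le_of_nonneg_of_le measureReal_nonneg measureReal_le_one
    measureReal_nonneg measureReal_le_one

lemma Measurable.tvDist [Finite X] {α : Type*} [MeasurableSpace α]
    {μ ν : α → Measure X} (hμ : Measurable μ) (hν : Measurable ν) :
    Measurable fun a => tvDist (μ a) (ν a) :=
  Measurable.iSup fun A =>
    (((Measure.measurable_coe A.2).comp hμ).ennreal_toReal.sub
      ((Measure.measurable_coe A.2).comp hν).ennreal_toReal).abs

lemma integrable_tvDist [Finite X] {α : Type*} [MeasurableSpace α] {ξ : Measure α}
    [IsFiniteMeasure ξ] {μ ν : α → Measure X} (hμ : Measurable μ) (hν : Measurable ν)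
    (hμ1 : ∀ a, IsProbabilityMeasure (μ a)) (hν1 : ∀ a, IsProbabilityMeasure (ν a)) :
    Integrable (fun a => tvDist (μ a) (ν a)) ξ :=
  Integrable.of_bound (hμ.tvDist hν).aestronglyMeasurable 1 (ae_of_all _ fun _ => by
    rw [Real.norm_of_nonneg tvDist_nonneg]; exact tvDist_le_one)

lemma integral_sub_integral_le_tvDist [IsProbabilityMeasure μ] [IsProbabilityMeasure ν]
    {h : X → ℝ} (hm : Measurable h) (h0 : ∀ x, 0 ≤ h x) (h1 : ∀ x, h x ≤ 1) :
    ∫ x, h x ∂μ - ∫ x, h x ∂ν ≤ tvDist μ ν := by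
  have layer_cake : ∀ (m : Measure X) [IsProbabilityMeasure m],
      ∫ x, h x ∂m = ∫ t in Set.Ioc 0 1, m.real {x | t < h x} := by
    intro m _
    rw [(Integrable.of_bound hm.aestronglyMeasurable 1 (ae_of_all _ fun x => by
      simpa [abs_of_nonneg (h0 x)] using h1 x)).integral_eq_integral_meas_lt (ae_of_all _ h0)]
    refine setIntegral_eq_of_subset_of_forall_sdiff_eq_zero measurableSet_Ioi
      Set.Ioc_subset_Ioi_self fun t ht => ?_
    have : {x | t < h x} = ∅ :=
      Set.eq_empty_of_forall_notMem fun x hx => ht.2 ⟨ht.1, hx.le.trans (h1 x)⟩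
    simp [this]
  have hint : ∀ (m : Measure X) [IsProbabilityMeasure m],
      IntegrableOn (fun t => m.real {x | t < h x}) (Set.Ioc 0 1) := by
    intro m _
    refine (AntitoneOn.integrableOn_isCompact isCompact_Icc fun s _ t _ hst => ?_).mono_set
      Set.Ioc_subset_Icc_self
    exact measureReal_mono fun x (hx : t < h x) => hst.trans_lt hx
  rw [layer_cake μ, layer_cake ν, ← integral_sub (hint μ) (hint ν)]
  calc _ ≤ ∫ _ in Set.Ioc (0 : ℝ) 1, tvDist μ ν :=
        setIntegral_mono ((hint μ).sub (hint ν)) (integrableOn_const (by simp)) fun t =>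
          (le_abs_self _).trans (abs_measureReal_sub_le_tvDist (measurableSet_lt measurable_const hm))
    _ = tvDist μ ν := by simp

lemma abs_integral_sub_integral_le_tvDist [IsProbabilityMeasure μ] [IsProbabilityMeasure ν]
    {h : X → ℝ} (hm : Measurable h) (hosc : ∀ x y, |h x - h y| ≤ 1) :
    |∫ x, h x ∂μ - ∫ x, h x ∂ν| ≤ tvDist μ ν := by
  obtain ⟨x₀⟩ := nonempty_of_isProbabilityMeasure μ
  have : Nonempty X := ⟨x₀⟩
  have hbdd : BddBelow (Set.range h) :=
    ⟨h x₀ - 1, by rintro _ ⟨x, rfl⟩; linarith [(abs_le.1 (hosc x₀ x)).2]⟩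
  set a := ⨅ x, h x
  have h0 : ∀ x, 0 ≤ h x - a := fun x => sub_nonneg.2 (ciInf_le hbdd x)
  have h1 : ∀ x, h x - a ≤ 1 := fun x =>
    sub_le_comm.1 (le_ciInf fun y => by linarith [(abs_le.1 (hosc x y)).2])
  have shift : ∀ (m : Measure X) [IsProbabilityMeasure m], ∫ x, h x - a ∂m = ∫ x, h x ∂m - a := by
    intro m _
    have hint : Integrable h m := Integrable.of_bound hm.aestronglyMeasurable (|h x₀| + 1)
      (ae_of_all _ fun x => by
        rw [Real.norm_eq_abs]
        linarith [abs_sub_abs_le_abs_sub (h x) (h x₀), hosc x x₀])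
    rw [integral_sub hint (integrable_const a), integral_const, probReal_univ, one_smul]
  have hm' : Measurable fun x => h x - a := hm.sub_const a
  have hμν := integral_sub_integral_le_tvDist (μ := μ) (ν := ν) hm' h0 h1
  have hνμ := integral_sub_integral_le_tvDist (μ := ν) (ν := μ) hm' h0 h1
  rw [shift, shift] at hμν hνμ
  rw [tvDist_comm] at hνμ
  rw [abs_le]
  constructor <;> linarith

end TotalVariation

section Wasserstein

lemma wassDual_le {X : Type*} [MeasurableSpace X] {d : X → X → ℝ} {μ ν : Measure X} {c : ℝ}
    (hd : ∀ x y, 0 ≤ d x y)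
    (h : ∀ f : X → ℝ, Measurable f → (∃ C, ∀ x, |f x| ≤ C) → (∀ x y, |f x - f y| ≤ d x y) →
      |∫ x, f x ∂μ - ∫ x, f x ∂ν| ≤ c) :
    wassDual d μ ν ≤ c := by
  have : Nonempty {f : X → ℝ // Measurable f ∧ (∃ C, ∀ x, |f x| ≤ C) ∧
      ∀ x y, |f x - f y| ≤ d x y} :=
    ⟨⟨0, measurable_const, ⟨0, by simp⟩, fun x y => by simpa using hd x y⟩⟩
  exact ciSup_le fun f => h f.1 f.2.1 f.2.2.1 f.2.2.2

lemma abs_integral_comp_sub_integral_comp_le {S X : Type*} [MeasurableSpace S]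
    [MeasurableSpace X] {d : X → X → ℝ} {μ : Measure S} [IsFiniteMeasure μ] {u v : S → X}
    (hu : Measurable u) (hv : Measurable v) {f : X → ℝ} (hf : Measurable f) {C : ℝ}
    (hfC : ∀ x, |f x| ≤ C) (hfd : ∀ x y, |f x - f y| ≤ d x y)
    (hd : Integrable (fun t => d (u t) (v t)) μ) :
    |∫ t, f (u t) ∂μ - ∫ t, f (v t) ∂μ| ≤ ∫ t, d (u t) (v t) ∂μ := by
  have hint : ∀ w : S → X, Measurable w → Integrable (fun t => f (w t)) μ := fun w hw =>
    Integrable.of_bound (hf.comp hw).aestronglyMeasurable C (ae_of_all _ fun t => hfC (w t))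
  rw [← integral_sub (hint u hu) (hint v hv)]
  exact abs_integral_le_integral_abs.trans
    (integral_mono ((hint u hu).sub (hint v hv)).abs hd fun t => hfd _ _)

lemma wassDual_map_inl_map_inr_le {S Sb : Type*} [MeasurableSpace S] [MeasurableSpace Sb]
    {d : S ⊕ Sb → S ⊕ Sb → ℝ} (hd : ∀ x y, d x y ∈ Set.Icc (0 : ℝ) 1)
    {μ : Measure S} [IsProbabilityMeasure μ] {ν : Measure Sb} [IsProbabilityMeasure ν]
    {φ : S → Sb} (hφ : Measurable φ) (hg : Measurable fun s => d (Sum.inl s) (Sum.inr (φ s))) :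
    wassDual d (μ.map Sum.inl) (ν.map Sum.inr) ≤
      ∫ s, d (Sum.inl s) (Sum.inr (φ s)) ∂μ + tvDist (μ.map φ) ν := by
  have := Measure.isProbabilityMeasure_map (μ := μ) hφ.aemeasurable
  refine wassDual_le (fun x y => (hd x y).1) fun f hf ⟨C, hfC⟩ hfd => ?_
  rw [integral_map measurable_inl.aemeasurable hf.aestronglyMeasurable,
    integral_map measurable_inr.aemeasurable hf.aestronglyMeasurable]
  have hcoupling := abs_integral_comp_sub_integral_comp_le (μ := μ) measurable_inl
    (measurable_inr.comp hφ) hf hfC hfd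
    (Integrable.of_bound hg.aestronglyMeasurable 1 (ae_of_all _ fun s => by
      rw [Real.norm_of_nonneg (hd _ _).1]; exact (hd _ _).2))
  have htv : |∫ s, f (Sum.inr (φ s)) ∂μ - ∫ b, f (Sum.inr b) ∂ν| ≤ tvDist (μ.map φ) ν := by
    rw [← integral_map (f := fun b => f (Sum.inr b)) hφ.aemeasurable
      (hf.comp measurable_inr).aestronglyMeasurable]
    exact abs_integral_sub_integral_le_tvDist (hf.comp measurable_inr) fun b b' =>
      (hfd _ _).trans (hd _ _).2
  exact (abs_sub_le _ _ _).trans (add_le_add hcoupling htv)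

end Wasserstein

lemma mul_measureReal_singleton_le_integral {X : Type*} [MeasurableSpace X] {μ : Measure X}
    [IsFiniteMeasure μ] {f : X → ℝ} (hf0 : ∀ x, 0 ≤ f x) (hf : Integrable f μ) (x : X) :
    f x * μ.real {x} ≤ ∫ y, f y ∂μ := by
  have hsub : {x} ⊆ {y | f x ≤ f y} := by simp
  exact (mul_le_mul_of_nonneg_left (measureReal_mono hsub) (hf0 x)).trans
    (mul_meas_ge_le_integral_of_nonneg (ae_of_all _ hf0) hf (f x))

namespace ProbabilityTheory.Kernel

variable {S : Type*} [MeasurableSpace S] {P : Kernel S S} {ξ : Measure S}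

lemma invariant_of_forall_eq_lintegral (h : ∀ A, MeasurableSet A → ξ A = ∫⁻ s, P s A ∂ξ) :
    P.Invariant ξ := by
  ext A hA
  rw [Measure.bind_apply hA P.aemeasurable]
  exact (h A hA).symm

namespace Invariant

lemma comp_const_unit (hP : P.Invariant ξ) : (P ∘ₖ const Unit ξ) () = ξ := by
  rw [comp_apply, const_apply, hP.def]

lemma integrable_integral (hP : P.Invariant ξ) {f : S → ℝ} (hf : Integrable f ξ) :
    Integrable (fun s => ∫ t, f t ∂P s) ξ :=
  (hP.comp_const_unit ▸ hf).integral_comp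

lemma integral_integral (hP : P.Invariant ξ) {f : S → ℝ} (hf : Integrable f ξ) :
    ∫ s, ∫ t, f t ∂P s ∂ξ = ∫ s, f s ∂ξ :=
  calc ∫ s, ∫ t, f t ∂P s ∂ξ = ∫ t, f t ∂(P ∘ₖ const Unit ξ) () := by
        rw [integral_comp (by rwa [hP.comp_const_unit]), const_apply]
    _ = ∫ s, f s ∂ξ := by rw [hP.comp_const_unit]

lemma integral_le_of_forall_le_discounted (hP : P.Invariant ξ) {g T : S → ℝ}
    (hg : Integrable g ξ) (hT : Integrable T ξ) {γ : ℝ} (hγ : γ < 1)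
    (hstep : ∀ s, g s ≤ γ * (∫ t, g t ∂P s + T s)) :
    ∫ s, g s ∂ξ ≤ γ * (∫ s, T s ∂ξ) / (1 - γ) := by
  have hPg := hP.integrable_integral hg
  have hint : Integrable (fun s => γ * (∫ t, g t ∂P s + T s)) ξ := (hPg.add hT).const_mul γ
  have hmean := integral_mono hg hint hstep
  rw [integral_const_mul, integral_add hPg hT, hP.integral_integral hg] at hmean
  rw [le_div_iff₀ (sub_pos.2 hγ)]
  linarith [mul_add γ (∫ s, g s ∂ξ) (∫ s, T s ∂ξ)]

end Invariant

end ProbabilityTheory.Kernel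

theorem bisimulation_closeness_labels_general
    {S : Type*} [MeasurableSpace S]
    {Sb : Type*} [Fintype Sb] [MeasurableSpace Sb] [DiscreteMeasurableSpace Sb]
    (P : Kernel S S) [IsMarkovKernel P]
    (Pb : Sb → PMF Sb)
    (φ : S → Sb) (hφ : Measurable φ)
    (ξ : Measure S) [IsProbabilityMeasure ξ]
    (hinv : ∀ A : Set S, MeasurableSet A → ξ A = ∫⁻ s, P s A ∂ξ)
    (γ : ℝ) (hγ0 : 0 ≤ γ) (hγ1 : γ < 1)
    (d : (S ⊕ Sb) → (S ⊕ Sb) → ℝ)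
    (hdmeas : Measurable (Function.uncurry d))
    (hd01 : ∀ x y, d x y ∈ Set.Icc (0 : ℝ) 1)
    (hdsymm : ∀ x y, d x y = d y x)
    (hdtri : ∀ x y z, d x z ≤ d x y + d y z)
    (hfix : ∀ s : S,
      d (Sum.inl s) (Sum.inr (φ s)) ≤
        γ * wassDual d (((P s).map Sum.inl : Measure (S ⊕ Sb)))
          (((Pb (φ s)).toMeasure.map Sum.inr : Measure (S ⊕ Sb))))
    (s₁ s₂ : S) (hφeq : φ s₁ = φ s₂)
    (hs₁ : 0 < ξ {s₁}) (hs₂ : 0 < ξ {s₂}) :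
    d (Sum.inl s₁) (Sum.inl s₂) ≤
      (γ * (∫ s, tvDist ((P s).map φ) ((Pb (φ s)).toMeasure) ∂ξ) / (1 - γ)) *
        ((ξ {s₁}).toReal⁻¹ + (ξ {s₂}).toReal⁻¹) := by
  set g : S → ℝ := fun s => d (Sum.inl s) (Sum.inr (φ s))
  set T : S → ℝ := fun s => tvDist ((P s).map φ) ((Pb (φ s)).toMeasure)
  have hg : Measurable g := hdmeas.comp (measurable_inl.prodMk (measurable_inr.comp hφ))
  have hg_int : Integrable g ξ := Integrable.of_bound hg.aestronglyMeasurable 1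
    (ae_of_all _ fun s => by rw [Real.norm_of_nonneg (hd01 _ _).1]; exact (hd01 _ _).2)
  have hT_int : Integrable T ξ :=
    integrable_tvDist ((Measure.measurable_map φ hφ).comp P.measurable)
      ((Measurable.of_discrete (f := fun b => (Pb b).toMeasure)).comp hφ)
      (fun s => Measure.isProbabilityMeasure_map hφ.aemeasurable) inferInstance
  have hstep : ∀ s, g s ≤ γ * (∫ t, g t ∂P s + T s) := fun s =>
    (hfix s).trans (mul_le_mul_of_nonneg_left (wassDual_map_inl_map_inr_le hd01 hφ hg) hγ0)
  have hmean := (Kernel.invariant_of_forall_eq_lintegral hinv).integral_le_of_forall_le_discounted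
    hg_int hT_int hγ1 hstep
  have hpoint : ∀ s, 0 < ξ {s} → g s ≤ (γ * (∫ s, T s ∂ξ) / (1 - γ)) * (ξ {s}).toReal⁻¹ := by
    intro s hs
    rw [← div_eq_mul_inv, le_div_iff₀ (ENNReal.toReal_pos hs.ne' (measure_ne_top _ _))]
    exact (mul_measureReal_singleton_le_integral (fun s => (hd01 _ _).1) hg_int s).trans hmean
  calc d (Sum.inl s₁) (Sum.inl s₂)
        ≤ d (Sum.inl s₁) (Sum.inr (φ s₁)) + d (Sum.inr (φ s₁)) (Sum.inl s₂) := hdtri _ _ _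
    _ = g s₁ + g s₂ := by simp only [g, hdsymm (Sum.inr _) (Sum.inl s₂), hφeq]
    _ ≤ _ := by
        rw [mul_add]
        exact add_le_add (hpoint s₁ hs₁) (hpoint s₂ hs₂)

/-- Abstraction-quality bound for the label-based bisimulation pseudometric: two states with
the same embedding and positive stationary mass are within bisimulation distance
`(γ·L_P/(1-γ))·(ξ{s₁}⁻¹ + ξ{s₂}⁻¹)` of each other. -/
theorem bisimulation_closeness_labels
    {S : Type*} [MeasurableSpace S] [MeasurableSingletonClass S]
    {Sb : Type*} [Fintype Sb] [Nonempty Sb] [MeasurableSpace Sb] [DiscreteMeasurableSpace Sb]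
    (P : Kernel S S) [IsMarkovKernel P]
    (Pb : Sb → PMF Sb)
    (φ : S → Sb) (hφ : Measurable φ)
    (ξ : Measure S) [IsProbabilityMeasure ξ]
    (hinv : ∀ A : Set S, MeasurableSet A → ξ A = ∫⁻ s, P s A ∂ξ)
    (γ : ℝ) (hγ0 : 0 ≤ γ) (hγ1 : γ < 1)
    (d : (S ⊕ Sb) → (S ⊕ Sb) → ℝ)
    (hdmeas : Measurable (Function.uncurry d))
    (hd01 : ∀ x y, d x y ∈ Set.Icc (0 : ℝ) 1)
    (hdrefl : ∀ x, d x x = 0)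
    (hdsymm : ∀ x y, d x y = d y x)
    (hdtri : ∀ x y z, d x z ≤ d x y + d y z)
    (hfix : ∀ s : S,
      d (Sum.inl s) (Sum.inr (φ s)) ≤
        γ * wassDual d (((P s).map Sum.inl : Measure (S ⊕ Sb)))
          (((Pb (φ s)).toMeasure.map Sum.inr : Measure (S ⊕ Sb))))
    (s₁ s₂ : S) (hφeq : φ s₁ = φ s₂)
    (hs₁ : 0 < ξ {s₁}) (hs₂ : 0 < ξ {s₂}) :
    d (Sum.inl s₁) (Sum.inl s₂) ≤
      (γ * (∫ s, tvDist ((P s).map φ) ((Pb (φ s)).toMeasure) ∂ξ) / (1 - γ)) *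
        ((ξ {s₁}).toReal⁻¹ + (ξ {s₂}).toReal⁻¹) :=
  bisimulation_closeness_labels_general P Pb φ hφ ξ hinv γ hγ0 hγ1 d hdmeas hd01 hdsymm hdtri hfix
    s₁ s₂ hφeq hs₁ hs₂
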